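/- Let 0 < a < b and let γ₀,γ₁ ≥ 0 with γ₁ ≤ 2/b and γ₀ − γ₁ ≤ 2. Let (ū,v̄) be the unique smooth solution on ℂ∖{0} of Δū = 4(e^{aū} − e^{v̄−ū}), Δv̄ = 4(e^{v̄−ū} − e^{−av̄}) with asymptotic data (γ₀,γ₁), and let (ũ,ṽ) be the unique smooth solution of Δũ = 4(e^{bũ} − e^{ṽ−ũ}), Δṽ = 4(e^{ṽ−ũ} − e^{−bṽ}) with the same asymptotic data (γ₀,γ₁). Then ū ≤ ũ and v̄ ≤ ṽ on ℂ∖{0}. -/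

import Mathlib

open Filter

/-- The Euclidean Laplacian of `f : ℂ → ℝ`, viewing `ℂ ≅ ℝ²` with orthonormal
directions `1` and `I`. -/
noncomputable def lap (f : ℂ → ℝ) (z : ℂ) : ℝ :=
  iteratedFDeriv ℝ 2 f z ![1, 1] + iteratedFDeriv ℝ 2 f z ![Complex.I, Complex.I]

/-- `f` is smooth on `ℂ ∖ {0}`. -/
def SmoothOffZero (f : ℂ → ℝ) : Prop := ContDiffOn ℝ (⊤ : ℕ∞) f {(0 : ℂ)}ᶜ

/-- `f z → 0` as `|z| → ∞`. -/
def TendstoZeroAtInfty (f : ℂ → ℝ) : Prop :=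
  Tendsto f (comap (fun z : ℂ => ‖z‖) atTop) (nhds 0)

/-- `f z / log |z| → γ` as `z → 0`. -/
def LogAsymAtZero (γ : ℝ) (f : ℂ → ℝ) : Prop :=
  Tendsto (fun z : ℂ => f z / Real.log ‖z‖) (nhdsWithin 0 {(0 : ℂ)}ᶜ) (nhds γ)

/-- `(u, v)` is a smooth solution on `ℂ ∖ {0}` of the two-function tt*-Toda system
`Δu = 4(e^{au} − e^{v−u})`, `Δv = 4(e^{v−u} − e^{−bv})`. -/
def IsTodaSol (a b : ℝ) (u v : ℂ → ℝ) : Prop :=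
  SmoothOffZero u ∧ SmoothOffZero v ∧
  ∀ z : ℂ, z ≠ 0 →
    lap u z = 4 * (Real.exp (a * u z) - Real.exp (v z - u z)) ∧
    lap v z = 4 * (Real.exp (v z - u z) - Real.exp (-(b * v z)))

/-- `(u, v)` has asymptotic data `(γ, δ)`: `u, v → 0` at `∞` and
`u(z)/log|z| → γ`, `v(z)/log|z| → δ` at `0`. -/
def HasAsymData (γ δ : ℝ) (u v : ℂ → ℝ) : Prop :=
  TendstoZeroAtInfty u ∧ TendstoZeroAtInfty v ∧ LogAsymAtZero γ u ∧ LogAsymAtZero δ v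

/-!
Everything rests on a maximum principle for pairs `(p, q)` on `ℂ ∖ {0}`: if wherever
`max p q > 0` the larger of the two is strictly subharmonic, and `p, q ≤ o(1)` at `∞` and
`p, q ≤ o(-log |z|)` at `0`, then `p, q ≤ 0`. On an annulus `δ ≤ |z| ≤ R` one compares
`max p q` with the harmonic barrier `ε + ε' (log R - log |z|)`: at an interior positive maximum
of the difference the larger function would have `Δ ≤ 0`. Then `ε' → 0` and `ε → 0`.

Applied to `(u + v, u + v)` and then to `(u, v)`, where the system gives
`Δ(u + v) = 4 (e^{cu} - e^{-cv})`, it shows that a solution with nonnegative data is nonpositive.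
Applied to `(ū - ũ, v̄ - ṽ)`, the sign `ū, v̄ ≤ 0` turns `a < b` into `a ū ≥ b ū`, which makes
the difference pair strictly subharmonic where its larger entry is positive.
-/

open Topology InnerProductSpace Laplacian

theorem IsLocalMax.deriv_deriv_nonpos {f : ℝ → ℝ} {x : ℝ} (h : IsLocalMax f x)
    (hc : ContinuousAt f x) : deriv (deriv f) x ≤ 0 := by
  by_contra! hpos
  -- a positive second derivative would make `x` a local minimum as well
  have hconst : f =ᶠ[𝓝 x] fun _ => f x := by
    filter_upwards [h, isLocalMin_of_deriv_deriv_pos hpos h.deriv_eq_zero hc] with y hmax hmin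
    exact le_antisymm hmax hmin
  have hderiv : deriv f =ᶠ[𝓝 x] fun _ => 0 := by
    filter_upwards [hconst.deriv] with y hy
    simpa using hy
  simp [hderiv.deriv_eq] at hpos

theorem IsLocalMax.fderiv_fderiv_apply_self_nonpos {E : Type*} [NormedAddCommGroup E]
    [NormedSpace ℝ E] {f : E → ℝ} {x : E} (h : IsLocalMax f x) (hf : ContDiffAt ℝ 2 f x)
    (v : E) : fderiv ℝ (fderiv ℝ f) x v v ≤ 0 := by
  let line : ℝ → E := fun t => x + t • v
  have hline (t : ℝ) : HasDerivAt line v t := by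
    simpa [line] using ((hasDerivAt_id t).smul_const v).const_add x
  have hline0 : line 0 = x := by simp [line]
  have hnear : Tendsto line (𝓝 0) (𝓝 x) := hline0 ▸ (hline 0).continuousAt.tendsto
  have hfirst : deriv (f ∘ line) =ᶠ[𝓝 0] fun t => fderiv ℝ f (line t) v := by
    filter_upwards [hnear.eventually (hf.eventually (by simp))] with t ht
    exact ((ht.differentiableAt (by simp)).hasFDerivAt.comp_hasDerivAt t (hline t)).deriv
  have hsecond : deriv (fun t => fderiv ℝ f (line t) v) 0 = fderiv ℝ (fderiv ℝ f) x v v := by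
    have hd : HasFDerivAt (fderiv ℝ f) (fderiv ℝ (fderiv ℝ f) x) (line 0) := hline0 ▸
      ((hf.fderiv_right (m := 1) (by norm_num)).differentiableAt one_ne_zero).hasFDerivAt
    simpa [Function.comp_def] using
      ((hd.clm_apply (hasFDerivAt_const v _)).comp_hasDerivAt 0 (hline 0)).deriv
  have hmax : IsLocalMax (f ∘ line) 0 :=
    IsLocalMax.comp_continuous (by rwa [hline0]) (hline 0).continuousAt
  rw [← hsecond, ← hfirst.deriv_eq]
  exact hmax.deriv_deriv_nonpos (hf.continuousAt.comp_of_eq (hline 0).continuousAt hline0)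

theorem IsLocalMax.laplacian_nonpos {E : Type*} [NormedAddCommGroup E] [InnerProductSpace ℝ E]
    [FiniteDimensional ℝ E] {f : E → ℝ} {x : E} (h : IsLocalMax f x) (hf : ContDiffAt ℝ 2 f x) :
    Δ f x ≤ 0 := by
  rw [laplacian_eq_iteratedFDeriv_stdOrthonormalBasis]
  refine Finset.sum_nonpos fun i _ => ?_
  rw [iteratedFDeriv_two_apply]
  exact h.fderiv_fderiv_apply_self_nonpos hf _

theorem IsLocalMax.of_le_of_eq {α β : Type*} [TopologicalSpace α] [Preorder β] {f g : α → β}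
    {x : α} (hg : IsLocalMax g x) (hfg : f ≤ g) (hx : f x = g x) : IsLocalMax f x :=
  hg.mono fun z hz => (hfg z).trans (hz.trans_eq hx.symm)

theorem IsLocalMax.laplacian_le {E : Type*} [NormedAddCommGroup E] [InnerProductSpace ℝ E]
    [FiniteDimensional ℝ E] {f h : E → ℝ} {x : E} (hmax : IsLocalMax (f - h) x)
    (hf : ContDiffAt ℝ 2 f x) (hh : ContDiffAt ℝ 2 h x) : Δ f x ≤ Δ h x := by
  have := hmax.laplacian_nonpos (hf.sub hh)
  rw [hf.laplacian_sub hh] at this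
  linarith

def PosMaxStrictSubharmonic (p q : ℂ → ℝ) : Prop :=
  ∀ z : ℂ, z ≠ 0 → (0 < p z → q z ≤ p z → 0 < Δ p z) ∧ (0 < q z → p z ≤ q z → 0 < Δ q z)

theorem PosMaxStrictSubharmonic.not_isLocalMax {p q h : ℂ → ℝ}
    (hpq : PosMaxStrictSubharmonic p q)
    {ζ : ℂ} (hζ : ζ ≠ 0) (hp : ContDiffAt ℝ 2 p ζ) (hq : ContDiffAt ℝ 2 q ζ)
    (hh : HarmonicAt h ζ) (hh0 : 0 ≤ h ζ) (hlt : h ζ < max (p ζ) (q ζ)) :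
    ¬ IsLocalMax (fun z => max (p z) (q z) - h z) ζ := by
  intro hmax
  have hΔh : Δ h ζ = 0 := hh.2.self_of_nhds
  rcases le_total (q ζ) (p ζ) with hqp | hpq'
  · rw [max_eq_left hqp] at hlt
    have := (hmax.of_le_of_eq (f := p - h) (fun z => sub_le_sub_right (le_max_left _ _) _)
      (by simp [max_eq_left hqp])).laplacian_le hp hh.1
    linarith [(hpq ζ hζ).1 (hh0.trans_lt hlt) hqp]
  · rw [max_eq_right hpq'] at hlt
    have := (hmax.of_le_of_eq (f := q - h) (fun z => sub_le_sub_right (le_max_right _ _) _)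
      (by simp [max_eq_right hpq'])).laplacian_le hq hh.1
    linarith [(hpq ζ hζ).2 (hh0.trans_lt hlt) hpq']

theorem PosMaxStrictSubharmonic.max_le_of_le_on_boundary {p q h : ℂ → ℝ}
    (hpq : PosMaxStrictSubharmonic p q) (hp : ∀ z : ℂ, z ≠ 0 → ContDiffAt ℝ 2 p z)
    (hq : ∀ z : ℂ, z ≠ 0 → ContDiffAt ℝ 2 q z) (hh : ∀ z : ℂ, z ≠ 0 → HarmonicAt h z)
    {δ R : ℝ} (hδ : 0 < δ)
    (hh0 : ∀ z : ℂ, δ ≤ ‖z‖ → ‖z‖ ≤ R → 0 ≤ h z)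
    (hsphere : ∀ z : ℂ, ‖z‖ = δ ∨ ‖z‖ = R → max (p z) (q z) ≤ h z)
    {z : ℂ} (hzδ : δ ≤ ‖z‖) (hzR : ‖z‖ ≤ R) : max (p z) (q z) ≤ h z := by
  set A : Set ℂ := {z | δ ≤ ‖z‖ ∧ ‖z‖ ≤ R}
  have hA0 : A ⊆ {0}ᶜ := fun z hz => norm_pos_iff.1 (hδ.trans_le hz.1)
  have hAc : IsCompact A := (isCompact_closedBall (0 : ℂ) R).of_isClosed_subset
    ((isClosed_le continuous_const continuous_norm).inter
      (isClosed_le continuous_norm continuous_const)) fun z hz => by simpa using hz.2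
  have hcont : ContinuousOn (fun z => max (p z) (q z) - h z) A :=
    fun z hz => (ContinuousAt.sub ((hp z (hA0 hz)).continuousAt.max (hq z (hA0 hz)).continuousAt)
      (hh z (hA0 hz)).1.continuousAt).continuousWithinAt
  obtain ⟨ζ, ⟨hζδ, hζR⟩, hζmax⟩ := hAc.exists_isMaxOn ⟨z, hzδ, hzR⟩ hcont
  suffices max (p ζ) (q ζ) ≤ h ζ by
    have : max (p z) (q z) - h z ≤ max (p ζ) (q ζ) - h ζ := hζmax ⟨hzδ, hzR⟩
    linarith
  by_contra! hlt
  have hζ0 : ζ ≠ 0 := hA0 ⟨hζδ, hζR⟩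
  have hint : δ < ‖ζ‖ ∧ ‖ζ‖ < R := by
    refine ⟨hζδ.lt_of_ne fun he => ?_, hζR.lt_of_ne fun he => ?_⟩ <;>
      linarith [hsphere ζ (by tauto)]
  have hAnhds : A ∈ 𝓝 ζ := by
    refine Filter.mem_of_superset (((isOpen_lt continuous_const continuous_norm).inter
      (isOpen_lt continuous_norm continuous_const)).mem_nhds hint) fun z hz => ?_
    exact ⟨le_of_lt hz.1, le_of_lt hz.2⟩
  exact hpq.not_isLocalMax hζ0 (hp ζ hζ0) (hq ζ hζ0) (hh ζ hζ0)
    (hh0 ζ hζδ hζR) hlt (hζmax.isLocalMax hAnhds)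

theorem le_of_forall_pos_le_add_mul {a b c : ℝ} (h : ∀ t > 0, a ≤ b + t * c) : a ≤ b := by
  have hlim : Tendsto (fun t => b + t * c) (𝓝[>] 0) (𝓝 b) :=
    tendsto_nhdsWithin_of_tendsto_nhds (by simpa using (continuous_const.add
      (continuous_id.mul continuous_const)).tendsto (0 : ℝ) (f := fun t => b + t * c))
  exact ge_of_tendsto hlim (eventually_nhdsWithin_of_forall h)

theorem harmonicAt_log_barrier {ε ε' R : ℝ} {z : ℂ} (hz : z ≠ 0) :
    HarmonicAt (fun w : ℂ => ε + ε' * (Real.log R - Real.log ‖w‖)) z := by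
  convert (harmonicAt_const (ε + ε' * Real.log R)).sub
    ((analyticAt_id.harmonicAt_log_norm hz).const_smul (c := ε')) using 1
  ext w
  simp only [id, Pi.sub_apply, Pi.smul_apply, smul_eq_mul]
  ring

theorem PosMaxStrictSubharmonic.max_le_log_barrier {p q : ℂ → ℝ}
    (hpq : PosMaxStrictSubharmonic p q) (hp : ∀ z : ℂ, z ≠ 0 → ContDiffAt ℝ 2 p z)
    (hq : ∀ z : ℂ, z ≠ 0 → ContDiffAt ℝ 2 q z) {ε ε' R : ℝ} (hε : 0 ≤ ε) (hε' : 0 < ε')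
    (hR : 1 ≤ R) (hsphere : ∀ z : ℂ, ‖z‖ = R → max (p z) (q z) ≤ ε)
    (hzero : ∀ᶠ z in 𝓝[≠] 0, max (p z) (q z) ≤ -ε' * Real.log ‖z‖)
    {z : ℂ} (hz : z ≠ 0) (hzR : ‖z‖ ≤ R) :
    max (p z) (q z) ≤ ε + ε' * (Real.log R - Real.log ‖z‖) := by
  obtain ⟨δ, hδ, hδzero⟩ := Metric.eventually_nhds_iff.1 (eventually_nhdsWithin_iff.1 hzero)
  have hlogR : 0 ≤ Real.log R := Real.log_nonneg hR
  refine hpq.max_le_of_le_on_boundary hp hq (fun w hw => harmonicAt_log_barrier hw)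
    (δ := min (δ / 2) ‖z‖) (lt_min (by positivity) (norm_pos_iff.2 hz))
    (fun w hwδ hwR => ?_) (fun w hw => ?_) (min_le_right _ _) hzR
  · have hw : 0 < ‖w‖ := (lt_min (by positivity) (norm_pos_iff.2 hz)).trans_le hwδ
    nlinarith [Real.log_le_log hw hwR]
  rcases hw with hw | hw
  · have hw0 : w ≠ 0 := norm_pos_iff.1 (hw ▸ lt_min (by positivity) (norm_pos_iff.2 hz))
    have hwδ : dist w 0 < δ := by
      rw [dist_zero_right, hw]; linarith [min_le_left (δ / 2) ‖z‖]
    nlinarith [hδzero hwδ hw0]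
  · simpa [hw] using hsphere w hw

theorem PosMaxStrictSubharmonic.nonpos {p q : ℂ → ℝ}
    (hpq : PosMaxStrictSubharmonic p q) (hp : ∀ z : ℂ, z ≠ 0 → ContDiffAt ℝ 2 p z)
    (hq : ∀ z : ℂ, z ≠ 0 → ContDiffAt ℝ 2 q z)
    (hp_inf : ∀ ε > 0, ∀ᶠ z in comap (fun z : ℂ => ‖z‖) atTop, p z ≤ ε)
    (hq_inf : ∀ ε > 0, ∀ᶠ z in comap (fun z : ℂ => ‖z‖) atTop, q z ≤ ε)
    (hp_zero : ∀ ε > 0, ∀ᶠ z in 𝓝[≠] 0, p z ≤ -ε * Real.log ‖z‖)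
    (hq_zero : ∀ ε > 0, ∀ᶠ z in 𝓝[≠] 0, q z ≤ -ε * Real.log ‖z‖)
    {z : ℂ} (hz : z ≠ 0) : p z ≤ 0 ∧ q z ≤ 0 := by
  rw [← max_le_iff]
  refine le_of_forall_pos_le_add fun ε hε => ?_
  obtain ⟨R₀, hR₀⟩ : ∃ R₀, ∀ r ≥ R₀, ∀ w : ℂ, ‖w‖ = r → p w ≤ ε ∧ q w ≤ ε := by
    have := (hp_inf ε hε).and (hq_inf ε hε)
    rwa [eventually_comap, eventually_atTop] at this
  set R := max R₀ (max 1 ‖z‖)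
  refine le_of_forall_pos_le_add_mul (c := Real.log R - Real.log ‖z‖) fun ε' hε' => ?_
  rw [zero_add]
  exact hpq.max_le_log_barrier hp hq hε.le hε' (le_max_of_le_right (le_max_left _ _))
    (fun w hw => max_le_iff.2 (hR₀ R (le_max_left _ _) w hw))
    (((hp_zero ε' hε').and (hq_zero ε' hε')).mono fun w hw => max_le hw.1 hw.2) hz
    (le_max_of_le_right (le_max_right _ _))

theorem lap_eq_laplacian (f : ℂ → ℝ) : lap f = Δ f := by
  ext z
  simp [lap, laplacian_eq_iteratedFDeriv_complexPlane]

theorem SmoothOffZero.contDiffAt {f : ℂ → ℝ} (hf : SmoothOffZero f) {z : ℂ} (hz : z ≠ 0) :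
    ContDiffAt ℝ 2 f z :=
  (ContDiffOn.contDiffAt hf (isOpen_compl_singleton.mem_nhds hz)).of_le
    (WithTop.coe_le_coe.2 le_top)

theorem TendstoZeroAtInfty.add {f g : ℂ → ℝ} (hf : TendstoZeroAtInfty f)
    (hg : TendstoZeroAtInfty g) : TendstoZeroAtInfty (f + g) := by
  have h := Tendsto.add hf hg
  rwa [add_zero] at h

theorem TendstoZeroAtInfty.sub {f g : ℂ → ℝ} (hf : TendstoZeroAtInfty f)
    (hg : TendstoZeroAtInfty g) : TendstoZeroAtInfty (f - g) := by
  have h := Tendsto.sub hf hg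
  rwa [sub_zero] at h

theorem TendstoZeroAtInfty.eventually_le {f : ℂ → ℝ} (hf : TendstoZeroAtInfty f) :
    ∀ ε > 0, ∀ᶠ z in comap (fun z : ℂ => ‖z‖) atTop, f z ≤ ε :=
  fun _ hε => Tendsto.eventually hf (eventually_le_nhds hε)

theorem LogAsymAtZero.add {γ δ : ℝ} {f g : ℂ → ℝ} (hf : LogAsymAtZero γ f)
    (hg : LogAsymAtZero δ g) : LogAsymAtZero (γ + δ) (f + g) := by
  simpa only [LogAsymAtZero, Pi.add_apply, add_div] using Tendsto.add hf hg

theorem LogAsymAtZero.sub {γ δ : ℝ} {f g : ℂ → ℝ} (hf : LogAsymAtZero γ f)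
    (hg : LogAsymAtZero δ g) : LogAsymAtZero (γ - δ) (f - g) := by
  simpa only [LogAsymAtZero, Pi.sub_apply, sub_div] using Tendsto.sub hf hg

theorem LogAsymAtZero.eventually_le_neg_mul_log {γ : ℝ} {f : ℂ → ℝ} (hf : LogAsymAtZero γ f)
    (hγ : 0 ≤ γ) : ∀ ε > 0, ∀ᶠ z in 𝓝[≠] 0, f z ≤ -ε * Real.log ‖z‖ := by
  intro ε hε
  have hlog : ∀ᶠ z in 𝓝[≠] (0 : ℂ), Real.log ‖z‖ < 0 := by
    filter_upwards [self_mem_nhdsWithin,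
      nhdsWithin_le_nhds (Metric.ball_mem_nhds (0 : ℂ) one_pos)] with z hz0 hz1
    exact Real.log_neg (norm_pos_iff.2 hz0) (mem_ball_zero_iff.1 hz1)
  filter_upwards [hlog, Tendsto.eventually hf (eventually_gt_nhds (by linarith : -ε < γ))]
    with z hL hgt
  exact ((lt_div_iff_of_neg hL).1 hgt).le

theorem IsTodaSol.add_nonpos {c γ₀ γ₁ : ℝ} {u v : ℂ → ℝ} (hsol : IsTodaSol c c u v)
    (hc : 0 < c) (hasym : HasAsymData γ₀ γ₁ u v) (h0 : 0 ≤ γ₀) (h1 : 0 ≤ γ₁) {z : ℂ}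
    (hz : z ≠ 0) : u z + v z ≤ 0 := by
  obtain ⟨hu, hv, heq⟩ := hsol
  obtain ⟨huI, hvI, hu0, hv0⟩ := hasym
  simp only [lap_eq_laplacian] at heq
  have hΔ : PosMaxStrictSubharmonic (u + v) (u + v) := by
    intro z hz
    have hΔz : Δ (u + v) z = 4 * (Real.exp (c * u z) - Real.exp (-(c * v z))) := by
      rw [(hu.contDiffAt hz).laplacian_add (hv.contDiffAt hz), (heq z hz).1, (heq z hz).2]
      ring
    have hpos_of_pos (hpos : 0 < (u + v) z) : 0 < Δ (u + v) z := by
      have : Real.exp (-(c * v z)) < Real.exp (c * u z) :=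
        Real.exp_lt_exp.2 (by nlinarith [mul_pos hc (show 0 < u z + v z from hpos)])
      linarith
    exact ⟨fun hpos _ => hpos_of_pos hpos, fun hpos _ => hpos_of_pos hpos⟩
  have huv z (hz : z ≠ 0) := (hu.contDiffAt hz).add (hv.contDiffAt hz)
  have huvI := (huI.add hvI).eventually_le
  have huv0 := (hu0.add hv0).eventually_le_neg_mul_log (add_nonneg h0 h1)
  exact (hΔ.nonpos huv huv huvI huvI huv0 huv0 hz).1

theorem IsTodaSol.nonpos {c γ₀ γ₁ : ℝ} {u v : ℂ → ℝ} (hsol : IsTodaSol c c u v) (hc : 0 < c)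
    (hasym : HasAsymData γ₀ γ₁ u v) (h0 : 0 ≤ γ₀) (h1 : 0 ≤ γ₁) {z : ℂ} (hz : z ≠ 0) :
    u z ≤ 0 ∧ v z ≤ 0 := by
  have hsum z (hz : z ≠ 0) := hsol.add_nonpos hc hasym h0 h1 hz
  obtain ⟨hu, hv, heq⟩ := hsol
  obtain ⟨huI, hvI, hu0, hv0⟩ := hasym
  simp only [lap_eq_laplacian] at heq
  have hΔ : PosMaxStrictSubharmonic u v := by
    intro z hz
    have hsum_z := hsum z hz
    refine ⟨fun hpos _ => ?_, fun hpos _ => ?_⟩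
    · have : Real.exp (v z - u z) < Real.exp (c * u z) :=
        Real.exp_lt_exp.2 (by nlinarith [mul_pos hc hpos])
      linarith [(heq z hz).1]
    · have : Real.exp (-(c * v z)) < Real.exp (v z - u z) :=
        Real.exp_lt_exp.2 (by nlinarith [mul_pos hc hpos])
      linarith [(heq z hz).2]
  exact hΔ.nonpos (fun _ => hu.contDiffAt) (fun _ => hv.contDiffAt) huI.eventually_le
    hvI.eventually_le (hu0.eventually_le_neg_mul_log h0) (hv0.eventually_le_neg_mul_log h1) hz

theorem IsTodaSol.posMaxStrictSubharmonic_sub {a b : ℝ} (hb : 0 < b) (hab : a ≤ b)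
    {ubar vbar utilde vtilde : ℂ → ℝ} (hbar : IsTodaSol a a ubar vbar)
    (htilde : IsTodaSol b b utilde vtilde)
    (hbar_nonpos : ∀ z : ℂ, z ≠ 0 → ubar z ≤ 0 ∧ vbar z ≤ 0) :
    PosMaxStrictSubharmonic (ubar - utilde) (vbar - vtilde) := by
  obtain ⟨hub, hvb, heqb⟩ := hbar
  obtain ⟨hut, hvt, heqt⟩ := htilde
  simp only [lap_eq_laplacian] at heqb heqt
  intro z hz
  obtain ⟨hubz, hvbz⟩ := hbar_nonpos z hz
  simp only [Pi.sub_apply, (hub.contDiffAt hz).laplacian_sub (hut.contDiffAt hz),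
    (hvb.contDiffAt hz).laplacian_sub (hvt.contDiffAt hz), (heqb z hz).1, (heqb z hz).2,
    (heqt z hz).1, (heqt z hz).2]
  refine ⟨fun hpos hqp => ?_, fun hpos hpq => ?_⟩
  · have : Real.exp (b * utilde z) < Real.exp (a * ubar z) :=
      Real.exp_lt_exp.2 (by nlinarith [mul_pos hb hpos])
    have : Real.exp (vbar z - ubar z) ≤ Real.exp (vtilde z - utilde z) :=
      Real.exp_le_exp.2 (by linarith)
    linarith
  · have : Real.exp (-(a * vbar z)) < Real.exp (-(b * vtilde z)) :=
      Real.exp_lt_exp.2 (by nlinarith [mul_pos hb hpos])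
    have : Real.exp (vtilde z - utilde z) ≤ Real.exp (vbar z - ubar z) :=
      Real.exp_le_exp.2 (by linarith)
    linarith

theorem toda_parameter_monotonicity_general (a b γ₀ γ₁ : ℝ) (ha : 0 < a) (hab : a < b)
    (h0 : 0 ≤ γ₀) (h1 : 0 ≤ γ₁)
    (ubar vbar : ℂ → ℝ) (hsolbar : IsTodaSol a a ubar vbar)
    (hasymbar : HasAsymData γ₀ γ₁ ubar vbar)
    (utilde vtilde : ℂ → ℝ) (hsoltilde : IsTodaSol b b utilde vtilde)
    (hasymtilde : HasAsymData γ₀ γ₁ utilde vtilde) :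
    ∀ z : ℂ, z ≠ 0 → ubar z ≤ utilde z ∧ vbar z ≤ vtilde z := by
  have hcoop := hsolbar.posMaxStrictSubharmonic_sub (ha.trans hab) hab.le hsoltilde
    fun z hz => hsolbar.nonpos ha hasymbar h0 h1 hz
  obtain ⟨hub, hvb, -⟩ := hsolbar
  obtain ⟨hut, hvt, -⟩ := hsoltilde
  obtain ⟨hubI, hvbI, hub0, hvb0⟩ := hasymbar
  obtain ⟨hutI, hvtI, hut0, hvt0⟩ := hasymtilde
  intro z hz
  have := hcoop.nonpos (fun w hw => (hub.contDiffAt hw).sub (hut.contDiffAt hw))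
    (fun w hw => (hvb.contDiffAt hw).sub (hvt.contDiffAt hw))
    (hubI.sub hutI).eventually_le (hvbI.sub hvtI).eventually_le
    ((hub0.sub hut0).eventually_le_neg_mul_log (sub_self γ₀).ge)
    ((hvb0.sub hvt0).eventually_le_neg_mul_log (sub_self γ₁).ge) hz
  simpa only [Pi.sub_apply, sub_nonpos] using this

/-- Monotonicity in the parameter: for `0 < a < b`, the solution of the equal-parameter
system with parameter `a` lies below the one with parameter `b` (same asymptotic data). -/
theorem toda_parameter_monotonicity (a b γ₀ γ₁ : ℝ) (ha : 0 < a) (hab : a < b)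
    (h0 : 0 ≤ γ₀) (h1 : 0 ≤ γ₁) (h2 : γ₁ ≤ 2 / b) (h3 : γ₀ - γ₁ ≤ 2)
    (ubar vbar : ℂ → ℝ) (hsolbar : IsTodaSol a a ubar vbar)
    (hasymbar : HasAsymData γ₀ γ₁ ubar vbar)
    (utilde vtilde : ℂ → ℝ) (hsoltilde : IsTodaSol b b utilde vtilde)
    (hasymtilde : HasAsymData γ₀ γ₁ utilde vtilde) :
    ∀ z : ℂ, z ≠ 0 → ubar z ≤ utilde z ∧ vbar z ≤ vtilde z :=
  toda_parameter_monotonicity_general a b γ₀ γ₁ ha hab h0 h1 ubar vbar hsolbar hasymbar utilde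
    vtilde hsoltilde hasymtilde
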